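/- arXiv:2102.06965 — 11 statements merged into one kernel-verified Lean document; each statement's English description precedes it below -/
import Mathlib

section
/- If a sequence (x_n) in a normed linear space X is rough I*-convergent of roughness degree r to a point x, then (x_n) is rough I-convergent of roughness degree r to x. -/
/-- `I` is an ideal of subsets of ℕ: closed under finite unions and subsets. -/
def IsIdeal (I : Set (Set ℕ)) : Prop :=
  (∀ A B : Set ℕ, A ∈ I → B ∈ I → A ∪ B ∈ I) ∧
  (∀ A B : Set ℕ, A ∈ I → B ⊆ A → B ∈ I)

/-- A nontrivial admissible ideal: an ideal containing all singletons, with ℕ ∉ I. -/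
def IsAdmissibleIdeal (I : Set (Set ℕ)) : Prop :=
  IsIdeal I ∧ (∀ n : ℕ, ({n} : Set ℕ) ∈ I) ∧ (Set.univ : Set ℕ) ∉ I

/-- The subsequence of `x` over `M` rough converges to `l` of degree `r`:
for each ε > 0, ‖x m − l‖ < r + ε for all but finitely many m ∈ M. -/
def RoughConvAlong {X : Type*} [NormedAddCommGroup X]
    (M : Set ℕ) (x : ℕ → X) (r : ℝ) (l : X) : Prop :=
  ∀ ε > (0:ℝ), {m ∈ M | r + ε ≤ ‖x m - l‖}.Finite

/-- Rough I-convergence of degree r to l. -/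
def RoughIConv (I : Set (Set ℕ)) {X : Type*} [NormedAddCommGroup X]
    (x : ℕ → X) (r : ℝ) (l : X) : Prop :=
  ∀ ε > (0:ℝ), {n : ℕ | r + ε ≤ ‖x n - l‖} ∈ I

/-- Rough I*-convergence of degree r to l. -/
def RoughIStarConv (I : Set (Set ℕ)) {X : Type*} [NormedAddCommGroup X]
    (x : ℕ → X) (r : ℝ) (l : X) : Prop :=
  ∃ M : Set ℕ, Mᶜ ∈ I ∧ RoughConvAlong M x r l

/-- The trace ideal K|M = {A ∩ M : A ∈ K}. -/
def traceIdeal (K : Set (Set ℕ)) (M : Set ℕ) : Set (Set ℕ) :=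
  {A | ∃ B ∈ K, A = B ∩ M}

/-- Rough I^K-convergence of degree r to l: there is M with Mᶜ ∈ I such that the
set of indices of the subsequence over M lying outside the (r+ε)-ball belongs to K|M. -/
def RoughIKConv (I K : Set (Set ℕ)) {X : Type*} [NormedAddCommGroup X]
    (x : ℕ → X) (r : ℝ) (l : X) : Prop :=
  ∃ M : Set ℕ, Mᶜ ∈ I ∧
    ∀ ε > (0:ℝ), {m ∈ M | r + ε ≤ ‖x m - l‖} ∈ traceIdeal K M

/-- The condition (AP) for an ideal I. -/
def APcond (I : Set (Set ℕ)) : Prop :=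
  ∀ A : ℕ → Set ℕ, (∀ j, A j ∈ I) → (Pairwise (Function.onFun Disjoint A)) →
    ∃ B : ℕ → Set ℕ, (∀ j, B j ∈ I) ∧ (∀ j, (symmDiff (A j) (B j)).Finite) ∧
      (⋃ j, B j) ∈ I

/-- The condition AP(I,K). -/
def APIK (I K : Set (Set ℕ)) : Prop :=
  ∀ A : ℕ → Set ℕ, (∀ j, A j ∈ I) → (Pairwise (Function.onFun Disjoint A)) →
    ∃ B : ℕ → Set ℕ, (∀ j, B j ∈ I) ∧ (∀ j, symmDiff (A j) (B j) ∈ K) ∧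
      (⋃ j, B j) ∈ I

theorem IsAdmissibleIdeal.mem_of_finite {I : Set (Set ℕ)} (hI : IsAdmissibleIdeal I)
    {A : Set ℕ} (hA : A.Finite) : A ∈ I := by
  induction A, hA using Set.Finite.induction_on with
  | empty => exact hI.1.2 {0} ∅ (hI.2.1 0) (Set.empty_subset _)
  | @insert a s _ _ ih => exact Set.insert_eq a s ▸ hI.1.1 _ _ (hI.2.1 a) ih

theorem stmt0_general {X : Type*} [NormedAddCommGroup X]
    (I : Set (Set ℕ)) (hI : IsAdmissibleIdeal I)
    (x : ℕ → X) (r : ℝ) (l : X)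
    (h : RoughIStarConv I x r l) : RoughIConv I x r l := by
  obtain ⟨M, hM, hconv⟩ := h
  intro ε hε
  have hbad : Mᶜ ∪ {m ∈ M | r + ε ≤ ‖x m - l‖} ∈ I :=
    hI.1.1 _ _ hM (hI.mem_of_finite (hconv ε hε))
  refine hI.1.2 _ _ hbad fun n hn => ?_
  by_cases hnM : n ∈ M
  · exact Or.inr ⟨hnM, hn⟩
  · exact Or.inl hnM

theorem stmt0 {X : Type*} [NormedAddCommGroup X] [NormedSpace ℝ X]
    (I : Set (Set ℕ)) (hI : IsAdmissibleIdeal I)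
    (x : ℕ → X) (r : ℝ) (hr : 0 ≤ r) (l : X)
    (h : RoughIStarConv I x r l) : RoughIConv I x r l :=
  stmt0_general I hI x r l h
end

section
/- If the admissible ideal I on ℕ satisfies the condition (AP), then every rough I-limit of degree r of a sequence (x_n) in a normed linear space is also a rough I*-limit of degree r of (x_n). -/
theorem stmt1 {X : Type*} [NormedAddCommGroup X] [NormedSpace ℝ X]
    (I : Set (Set ℕ)) (hI : IsAdmissibleIdeal I) (hAP : APcond I)
    (x : ℕ → X) (r : ℝ) (hr : 0 ≤ r) (l : X)
    (h : RoughIConv I x r l) : RoughIStarConv I x r l := by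
  obtain ⟨⟨hunion, hsub⟩, hsing, huniv⟩ := hI
  set g : ℕ → ℝ := fun n => ‖x n - l‖ - r with hgdef
  set A : ℕ → Set ℕ := fun j =>
    Nat.casesOn j {n | 1 < g n} (fun i => {n | 1/(i+2) < g n ∧ g n ≤ 1/(i+1)}) with hA
  have hAmem : ∀ j, A j ∈ I := by
    intro j
    cases j with
    | zero =>
        refine hsub _ _ (h 1 one_pos) ?_
        intro n hn
        have hn' : 1 < g n := hn
        simp only [Set.mem_setOf_eq, hgdef]
        simp only [hgdef] at hn'
        linarith
    | succ i =>
        have hpos : (0:ℝ) < 1/(i+2) := by positivity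
        refine hsub _ _ (h (1/(i+2)) hpos) ?_
        intro n hn
        have hn' : 1/((i:ℝ)+2) < g n ∧ g n ≤ 1/(i+1) := hn
        simp only [Set.mem_setOf_eq, hgdef]
        simp only [hgdef] at hn'
        linarith [hn'.1]
  have hdisj : ∀ i j : ℕ, i < j → Disjoint (A i) (A j) := by
    intro i j hij
    rw [Set.disjoint_left]
    intro n hni hnj
    obtain ⟨j', rfl⟩ : ∃ j', j = j' + 1 := ⟨j - 1, by omega⟩
    have hnj' : 1/((j':ℝ)+2) < g n ∧ g n ≤ 1/(j'+1) := hnj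
    cases i with
    | zero =>
        have hg1 : 1 < g n := hni
        have h1 : 1/((j':ℝ)+1) ≤ 1 := by
          rw [div_le_one (by positivity)]
          linarith [(Nat.cast_nonneg j' : (0:ℝ) ≤ (j':ℝ))]
        exact absurd (hnj'.2.trans h1) (not_le.mpr hg1)
    | succ i' =>
        have hni' : 1/((i':ℝ)+2) < g n ∧ g n ≤ 1/(i'+1) := hni
        have hle : ((i':ℝ)+2) ≤ (j'+1) := by
          have : i' + 2 ≤ j' + 1 := by omega
          exact_mod_cast this
        have : 1/((j':ℝ)+1) ≤ 1/((i':ℝ)+2) :=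
          one_div_le_one_div_of_le (by positivity) hle
        linarith [hni'.1, hnj'.2]
  have hpw : Pairwise (Function.onFun Disjoint A) := by
    intro i j hij
    rcases lt_or_gt_of_ne hij with h' | h'
    · exact hdisj i j h'
    · exact (hdisj j i h').symm
  obtain ⟨B, hBmem, hBfin, hBU⟩ := hAP A hAmem hpw
  refine ⟨(⋃ j, B j)ᶜ, by simpa using hBU, ?_⟩
  intro ε hε
  obtain ⟨k, hk⟩ := exists_nat_one_div_lt hε
  refine Set.Finite.subset
    (Set.Finite.biUnion (Finset.range (k+2)).finite_toSet
      (fun j _ => hBfin j)) ?_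
  rintro m ⟨hmM, hm⟩
  have hgm : 1/((k:ℝ)+1) < g m := by simp only [hgdef]; linarith
  have hgm0 : 0 < g m := lt_trans (by positivity) hgm
  have hmnotB : ∀ j, m ∉ B j := by
    intro j hj
    exact hmM (Set.mem_iUnion.mpr ⟨j, hj⟩)
  -- find j ≤ k+1 with m ∈ A j
  have : ∃ j ∈ Finset.range (k+2), m ∈ A j := by
    by_cases h1 : 1 < g m
    · exact ⟨0, Finset.mem_range.mpr (by omega), h1⟩
    · push_neg at h1
      set t := g m with ht
      have hinv1 : (1:ℝ) ≤ 1/t := by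
        rw [le_div_iff₀ hgm0]; linarith
      have hp1 : 1 ≤ ⌊1/t⌋₊ := Nat.le_floor (by exact_mod_cast hinv1)
      have hfl : ((⌊1/t⌋₊:ℕ):ℝ) ≤ 1/t := Nat.floor_le (by positivity)
      have hfl2 : 1/t < ((⌊1/t⌋₊:ℕ):ℝ) + 1 := Nat.lt_floor_add_one _
      obtain ⟨i, hpi⟩ : ∃ i, ⌊1/t⌋₊ = i + 1 := ⟨⌊1/t⌋₊ - 1, by omega⟩
      rw [hpi] at hfl hfl2
      have htle : t ≤ 1/((i:ℝ)+1) := by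
        rw [le_div_iff₀ (by positivity)]
        rw [le_div_iff₀ hgm0] at hfl
        push_cast at hfl ⊢
        linarith
      have htgt : 1/((i:ℝ)+2) < t := by
        rw [div_lt_iff₀ (by positivity)]
        rw [div_lt_iff₀ hgm0] at hfl2
        push_cast at hfl2 ⊢
        linarith
      have hplt : ((i:ℝ)+1) < (k:ℝ)+1 := by
        have h1t : 1/t < (k:ℝ)+1 := by
          rw [div_lt_iff₀ hgm0]
          rw [div_lt_iff₀ (by positivity : (0:ℝ) < (k:ℝ)+1)] at hgm
          linarith
        push_cast at hfl ⊢
        linarith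
      have : i + 1 < k + 2 := by exact_mod_cast (by push_cast; linarith : ((i:ℕ):ℝ) + 1 < (k:ℝ) + 2)
      exact ⟨i+1, Finset.mem_range.mpr this, ⟨htgt, htle⟩⟩
  obtain ⟨j, hjr, hmA⟩ := this
  refine Set.mem_biUnion hjr ?_
  rw [Set.mem_symmDiff]
  exact Or.inl ⟨hmA, hmnotB j⟩
end

section
/- Let I and K be admissible ideals on ℕ with K ⊆ I. If a sequence (x_n) in a normed linear space is rough I^K-convergent of degree r to x, then it is rough I-convergent of degree r to x. -/
theorem stmt4 {X : Type*} [NormedAddCommGroup X] [NormedSpace ℝ X]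
    (I K : Set (Set ℕ)) (hI : IsAdmissibleIdeal I) (hK : IsAdmissibleIdeal K)
    (hKI : K ⊆ I)
    (x : ℕ → X) (r : ℝ) (hr : 0 ≤ r) (l : X)
    (h : RoughIKConv I K x r l) : RoughIConv I x r l := by
  obtain ⟨M, hM, hconv⟩ := h
  intro ε hε
  obtain ⟨B, hB, hBM⟩ := hconv ε hε
  have hunion : Mᶜ ∪ (B ∩ M) ∈ I :=
    hI.1.1 _ _ hM (hI.1.2 _ _ (hKI hB) (Set.inter_subset_left))
  refine hI.1.2 _ _ hunion ?_
  intro n hn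
  by_cases hnM : n ∈ M
  · right; rw [← hBM]; exact ⟨hnM, hn⟩
  · left; exact hnM
end

section
/- Let I and K be admissible ideals on ℕ and X a normed linear space containing a vector of norm 1. If for every sequence (x_n) in X and every r ≥ 0, every rough I^K-limit of degree r is also a rough I-limit of degree r, then K ⊆ I. -/
theorem stmt6 {X : Type*} [NormedAddCommGroup X] [NormedSpace ℝ X]
    (I K : Set (Set ℕ)) (hI : IsAdmissibleIdeal I) (hK : IsAdmissibleIdeal K)
    (hX : ∃ v : X, ‖v‖ = 1)
    (h : ∀ (x : ℕ → X) (r : ℝ), 0 ≤ r → ∀ l : X,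
      RoughIKConv I K x r l → RoughIConv I x r l) :
    K ⊆ I := by
  intro A hA
  obtain ⟨v, hv⟩ := hX
  classical
  set x : ℕ → X := fun n => if n ∈ A then v else 0 with hx
  have key : RoughIConv I x 0 0 := by
    apply h x 0 le_rfl 0
    refine ⟨Set.univ, ?_, ?_⟩
    · have : (Set.univ : Set ℕ)ᶜ = ∅ := by simp
      rw [this]
      exact hI.1.2 {0} ∅ (hI.2.1 0) (Set.empty_subset _)
    · intro ε hε
      refine ⟨{m ∈ Set.univ | 0 + ε ≤ ‖x m - 0‖}, ?_, by simp⟩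
      apply hK.1.2 A _ hA
      intro m hm
      simp only [Set.mem_setOf_eq, Set.mem_univ, true_and, sub_zero] at hm
      by_contra hmA
      simp [hx, hmA] at hm
      linarith
  have := key (1/2) (by norm_num)
  have hEq : {n : ℕ | 0 + 1/2 ≤ ‖x n - 0‖} = A := by
    ext n
    simp only [Set.mem_setOf_eq, sub_zero, zero_add, hx]
    by_cases hn : n ∈ A <;> simp [hn, hv] <;> norm_num
  rwa [hEq] at this
end

section
/- Let I and K be admissible ideals on ℕ such that I satisfies the condition (AP). Then for every sequence (x_n) in a normed linear space and every r ≥ 0, the rough I-limit set of degree r is contained in the rough I^K-limit set of degree r. -/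
/-!
Along the sets `C j = {n | r + 1/(j+1) ≤ ‖x n - l‖} ∈ I`, condition (AP) yields a single set
`U ∈ I` with every `C j \ U` finite: apply it to the disjointed sequence of the `C j` and take
`U` to be the union of the resulting sets. Off `U` the sequence is then rough convergent in the
ordinary sense (rough I*-convergence), and finite sets lie in any admissible ideal `K`.
-/

theorem IsAdmissibleIdeal.finite_mem {K : Set (Set ℕ)} (hK : IsAdmissibleIdeal K)
    {S : Set ℕ} (hS : S.Finite) : S ∈ K := by
  induction S, hS using Set.Finite.induction_on with
  | empty => exact hK.1.2 {0} ∅ (hK.2.1 0) (Set.empty_subset _)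
  | insert _ _ ih => exact hK.1.1 _ _ (hK.2.1 _) ih

theorem APcond.exists_diff_finite {I : Set (Set ℕ)} (hI : IsIdeal I) (hAP : APcond I)
    {C : ℕ → Set ℕ} (hC : ∀ j, C j ∈ I) : ∃ U ∈ I, ∀ j, (C j \ U).Finite := by
  obtain ⟨B, -, hfin, hU⟩ := hAP (disjointed C)
    (fun j => hI.2 _ _ (hC j) (disjointed_subset C j)) (disjoint_disjointed C)
  refine ⟨⋃ j, B j, hU, fun j => ?_⟩
  have hsub : C j \ ⋃ i, B i ⊆ ⋃ i ∈ Finset.range (j + 1), symmDiff (disjointed C i) (B i) := by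
    rintro m ⟨hmC, hmU⟩
    have hmA : m ∈ ⋃ i ∈ Finset.range (j + 1), disjointed C i := by
      rw [biUnion_range_succ_disjointed]
      exact le_partialSups C j hmC
    obtain ⟨i, hi, hmi⟩ := Set.mem_iUnion₂.mp hmA
    exact Set.mem_biUnion hi (Set.mem_symmDiff.mpr
      (Or.inl ⟨hmi, fun hmB => hmU (Set.mem_iUnion.mpr ⟨i, hmB⟩)⟩))
  exact ((Finset.range (j + 1)).finite_toSet.biUnion fun i _ => hfin i).subset hsub

section

variable {I K : Set (Set ℕ)} {X : Type*} [NormedAddCommGroup X] {x : ℕ → X} {r : ℝ} {l : X}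

theorem RoughIConv.roughIStarConv (hI : IsIdeal I) (hAP : APcond I)
    (h : RoughIConv I x r l) : RoughIStarConv I x r l := by
  obtain ⟨U, hU, hfin⟩ := hAP.exists_diff_finite hI
    (C := fun j : ℕ => {n | r + 1 / (j + 1) ≤ ‖x n - l‖}) fun j => h _ Nat.one_div_pos_of_nat
  refine ⟨Uᶜ, by rwa [compl_compl], fun ε hε => ?_⟩
  obtain ⟨j, hj⟩ := exists_nat_one_div_lt hε
  refine (hfin j).subset fun m ⟨hmU, hm⟩ => ⟨?_, hmU⟩
  change r + 1 / (j + 1) ≤ ‖x m - l‖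
  linarith

theorem RoughIStarConv.roughIKConv (hK : IsAdmissibleIdeal K)
    (h : RoughIStarConv I x r l) : RoughIKConv I K x r l := by
  obtain ⟨M, hM, hconv⟩ := h
  exact ⟨M, hM, fun ε hε => ⟨_, hK.finite_mem (hconv ε hε),
    (Set.inter_eq_self_of_subset_left fun _ hm => hm.1).symm⟩⟩

end

theorem stmt7_general {X : Type*} [NormedAddCommGroup X]
    (I K : Set (Set ℕ)) (hI : IsAdmissibleIdeal I) (hK : IsAdmissibleIdeal K)
    (hAP : APcond I)
    (x : ℕ → X) (r : ℝ) :
    {l : X | RoughIConv I x r l} ⊆ {l : X | RoughIKConv I K x r l} :=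
  fun _ hl => (hl.roughIStarConv hI.1 hAP).roughIKConv hK

theorem stmt7 {X : Type*} [NormedAddCommGroup X] [NormedSpace ℝ X]
    (I K : Set (Set ℕ)) (hI : IsAdmissibleIdeal I) (hK : IsAdmissibleIdeal K)
    (hAP : APcond I)
    (x : ℕ → X) (r : ℝ) (hr : 0 ≤ r) :
    {l : X | RoughIConv I x r l} ⊆ {l : X | RoughIKConv I K x r l} :=
  stmt7_general I K hI hK hAP x r
end

section
/- Let I and K be admissible ideals on ℕ. If for every sequence of real numbers (x_n) and every r ≥ 0 the rough I-limit set of degree r is contained in the rough I^K-limit set of degree r, then for every sequence of mutually disjoint sets A_1, A_2, ... in I there exist sets B_1, B_2, ... in I such that A_j Δ B_j ∈ K for each j and ⋃_j B_j ∈ I (i.e., the condition AP(I,K) holds). -/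
lemma ideal_biUnion_lt (I : Set (Set ℕ)) (hI : IsIdeal I) (hempty : ∅ ∈ I)
    (S : ℕ → Set ℕ) (hS : ∀ j, S j ∈ I) (N : ℕ) : (⋃ j < N, S j) ∈ I := by
  induction N with
  | zero => simpa using hempty
  | succ n ih =>
      rw [Set.biUnion_lt_succ]
      exact hI.1 _ _ ih (hS n)

theorem stmt8 (I K : Set (Set ℕ))
    (hI : IsAdmissibleIdeal I) (hK : IsAdmissibleIdeal K)
    (h : ∀ (x : ℕ → ℝ) (r : ℝ), 0 ≤ r →
      {l : ℝ | RoughIConv I x r l} ⊆ {l : ℝ | RoughIKConv I K x r l}) :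
    ∀ A : ℕ → Set ℕ, (∀ j, A j ∈ I) → (Pairwise (Function.onFun Disjoint A)) →
      ∃ B : ℕ → Set ℕ, (∀ j, B j ∈ I) ∧ (∀ j, symmDiff (A j) (B j) ∈ K) ∧
        (⋃ j, B j) ∈ I := by
  classical
  intro A hA hdisj
  obtain ⟨⟨hIunion, hIsub⟩, hIsing, _⟩ := hI
  have hIempty : (∅ : Set ℕ) ∈ I := hIsub _ _ (hIsing 0) (by simp)
  -- define the sequence
  set x : ℕ → ℝ := fun n => if h : ∃ j, n ∈ A j then ((Nat.find h : ℝ) + 1)⁻¹ else 0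
    with hx
  have hxval : ∀ j n, n ∈ A j → x n = ((j : ℝ) + 1)⁻¹ := by
    intro j n hn
    have hex : ∃ j, n ∈ A j := ⟨j, hn⟩
    have hfind : Nat.find hex = j := by
      by_contra hne
      exact Set.disjoint_left.mp (hdisj hne) (Nat.find_spec hex) hn
    simp only [hx, dif_pos hex, hfind]
  -- x rough-I-converges to 0 of degree 0
  have hconv : RoughIConv I x 0 0 := by
    intro ε hε
    set N := ⌈ε⁻¹⌉₊ with hN
    have hsub : {n : ℕ | 0 + ε ≤ ‖x n - 0‖} ⊆ ⋃ j < N, A j := by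
      intro n hn
      simp only [Set.mem_setOf_eq, zero_add, sub_zero, Real.norm_eq_abs] at hn
      by_cases hex : ∃ j, n ∈ A j
      · obtain ⟨j, hj⟩ := hex
        have hxn := hxval j n hj
        rw [hxn] at hn
        have hpos : (0:ℝ) < (j:ℝ) + 1 := by positivity
        rw [abs_of_pos (by positivity)] at hn
        have key : ε * ((j:ℝ)+1) ≤ 1 := by
          calc ε * ((j:ℝ)+1) ≤ ((j:ℝ)+1)⁻¹ * ((j:ℝ)+1) := by nlinarith
            _ = 1 := inv_mul_cancel₀ hpos.ne'
        have h1 : (j:ℝ) + 1 ≤ ε⁻¹ := by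
          rw [← one_div, le_div_iff₀ hε]
          nlinarith [key]
        have h2 : (j:ℝ) + 1 ≤ (N:ℝ) := h1.trans (Nat.le_ceil _)
        have hjN : j < N := by exact_mod_cast (by linarith : (j:ℝ) < N)
        exact Set.mem_biUnion hjN hj
      · simp only [hx, dif_neg hex, abs_zero] at hn; linarith
    exact hIsub _ _ (ideal_biUnion_lt I ⟨hIunion, hIsub⟩ hIempty A hA N) hsub
  -- apply hypothesis
  have hik : RoughIKConv I K x 0 0 := h x 0 le_rfl hconv
  obtain ⟨M, hMc, hM⟩ := hik
  refine ⟨fun j => A j \ M, fun j => hIsub _ _ (hA j) Set.diff_subset, ?_, ?_⟩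
  · intro j
    have hε : (0:ℝ) < ((j:ℝ) + 1)⁻¹ := by positivity
    obtain ⟨C, hC, hCeq⟩ := hM _ hε
    have hsub : A j ∩ M ⊆ C := by
      intro n ⟨hn1, hn2⟩
      have : n ∈ {m ∈ M | 0 + ((j:ℝ)+1)⁻¹ ≤ ‖x m - 0‖} := by
        refine ⟨hn2, ?_⟩
        rw [hxval j n hn1, sub_zero, Real.norm_eq_abs, abs_of_pos hε, zero_add]
      rw [hCeq] at this
      exact this.1
    have hsd : symmDiff (A j) (A j \ M) = A j ∩ M := by
      rw [symmDiff_def]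
      ext n
      simp only [Set.sup_eq_union, Set.mem_union, Set.mem_diff, Set.mem_inter_iff]
      tauto
    rw [hsd]
    exact hK.1.2 _ _ hC hsub
  · refine hIsub _ _ hMc ?_
    intro n hn
    simp only [Set.mem_iUnion, Set.mem_diff] at hn
    obtain ⟨j, _, hnM⟩ := hn
    exact hnM
end

section
/- Let I and K be admissible ideals on ℕ with K ⊆ I, and suppose I satisfies (AP). Then every rough I^K-limit of degree r of a sequence (x_n) in a normed linear space is also a rough I*-limit of degree r of (x_n). -/
theorem stmt10 {X : Type*} [NormedAddCommGroup X] [NormedSpace ℝ X]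
    (I K : Set (Set ℕ)) (hI : IsAdmissibleIdeal I) (hK : IsAdmissibleIdeal K)
    (hKI : K ⊆ I) (hAP : APcond I)
    (x : ℕ → X) (r : ℝ) (hr : 0 ≤ r) (l : X)
    (h : RoughIKConv I K x r l) : RoughIStarConv I x r l := by
  classical
  obtain ⟨M, hMc, hM⟩ := h
  set E : ℕ → Set ℕ := fun j => {m ∈ M | r + 1/(j+1) ≤ ‖x m - l‖} with hEdef
  have hEI : ∀ j, E j ∈ I := by
    intro j
    have hpos : (0:ℝ) < 1/((j:ℝ)+1) := by positivity
    obtain ⟨B, hBK, hBeq⟩ := hM (1/((j:ℝ)+1)) hpos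
    have : E j = B ∩ M := hBeq
    rw [this]
    exact hI.1.2 B (B ∩ M) (hKI hBK) Set.inter_subset_left
  have hEM : ∀ j, E j ⊆ M := fun j m hm => hm.1
  have hEmono : ∀ i j, i ≤ j → E i ⊆ E j := by
    intro i j hij m hm
    refine ⟨hm.1, le_trans ?_ hm.2⟩
    have : 1/((j:ℝ)+1) ≤ 1/((i:ℝ)+1) := by
      apply one_div_le_one_div_of_le (by positivity)
      exact_mod_cast Nat.succ_le_succ hij
    linarith
  set D : ℕ → Set ℕ := fun j => E j \ ⋃ i < j, E i with hDdef
  set A : ℕ → Set ℕ := fun n => match n with | 0 => Mᶜ | j+1 => D j with hAdef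
  have hAI : ∀ j, A j ∈ I := by
    rintro (_|j)
    · exact hMc
    · exact hI.1.2 (E j) (D j) (hEI j) Set.diff_subset
  have hDM : ∀ j, D j ⊆ M := fun j => Set.diff_subset.trans (hEM j)
  have hdisj : ∀ i j : ℕ, i < j → Disjoint (A i) (A j) := by
    rintro (_|i) (_|j) hij
    · omega
    · exact Set.disjoint_compl_left_iff_subset.mpr (hDM j)
    · omega
    · have hij' : i < j := by omega
      rw [Set.disjoint_left]
      intro m hmi hmj
      apply hmj.2
      exact Set.mem_biUnion hij' (Set.diff_subset hmi)
  obtain ⟨B, hBI, hBfin, hBU⟩ := hAP A hAI (fun i j hij =>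
    hij.lt_or_gt.elim (fun h' => hdisj i j h') (fun h' => (hdisj j i h').symm))
  refine ⟨(⋃ j, B j)ᶜ, by simpa using hBU, ?_⟩
  intro ε hε
  obtain ⟨n, hn⟩ := exists_nat_one_div_lt hε
  have hsub : {m ∈ (⋃ j, B j)ᶜ | r + ε ≤ ‖x m - l‖} ⊆
      ⋃ j ∈ Finset.range (n+2), (A j \ B j) := by
    rintro m ⟨hmM', hmnorm⟩
    have hmB : ∀ j, m ∉ B j := by simpa using hmM'
    by_cases hmem : m ∈ M
    · have hmEn : m ∈ E n := ⟨hmem, le_trans (by linarith) hmnorm⟩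
      have hex : ∃ j, m ∈ E j := ⟨n, hmEn⟩
      set j := Nat.find hex with hj
      have hjE : m ∈ E j := Nat.find_spec hex
      have hjle : j ≤ n := Nat.find_le hmEn
      have hmD : m ∈ D j := by
        refine ⟨hjE, ?_⟩
        simp only [Set.mem_iUnion]
        rintro ⟨i, hi, hmi⟩
        exact Nat.find_min hex hi hmi
      refine Set.mem_biUnion (Finset.mem_range.mpr (Nat.succ_lt_succ (Nat.lt_succ_of_le hjle))) ?_
      exact ⟨hmD, hmB (j+1)⟩
    · refine Set.mem_biUnion (Finset.mem_range.mpr (by omega : 0 < n+2)) ?_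
      exact ⟨hmem, hmB 0⟩
  refine Set.Finite.subset ?_ hsub
  refine Set.Finite.biUnion (Finset.range (n+2)).finite_toSet (fun j _ => ?_)
  refine (hBfin j).subset ?_
  rw [Set.symmDiff_def]
  exact Set.subset_union_left
end

section
/- Let I and K be admissible ideals on ℕ. A sequence (x_n) in a normed linear space is K|M-bounded (for some M with ℕ \ M ∈ I) if and only if there exists r ≥ 0 such that the rough I^K-limit set of degree r of (x_n) is nonempty. -/
/-- `x` is K|M-bounded: there are M with Mᶜ ∈ I and L > 0 such that
{m ∈ M : ‖x m‖ ≥ L} ∈ K|M. -/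
def KMBounded (I K : Set (Set ℕ)) {X : Type*} [NormedAddCommGroup X]
    (x : ℕ → X) : Prop :=
  ∃ M : Set ℕ, Mᶜ ∈ I ∧ ∃ L > (0:ℝ), {m ∈ M | L ≤ ‖x m‖} ∈ traceIdeal K M

theorem stmt11 {X : Type*} [NormedAddCommGroup X] [NormedSpace ℝ X]
    (I K : Set (Set ℕ)) (hI : IsAdmissibleIdeal I) (hK : IsAdmissibleIdeal K)
    (x : ℕ → X) :
    KMBounded I K x ↔ ∃ r : ℝ, 0 ≤ r ∧ ∃ l : X, RoughIKConv I K x r l := by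
  have htrace : ∀ (M A A' : Set ℕ), A ∈ traceIdeal K M → A' ⊆ A → A' ⊆ M →
      A' ∈ traceIdeal K M := by
    rintro M A A' ⟨B, hB, rfl⟩ hsub hsubM
    exact ⟨A', hK.1.2 B A' hB (fun n hn => (hsub hn).1), (Set.inter_eq_left.mpr hsubM).symm⟩
  constructor
  · rintro ⟨M, hM, L, hL, hset⟩
    refine ⟨L, le_of_lt hL, 0, M, hM, fun ε hε => ?_⟩
    refine htrace M _ _ hset ?_ (fun m hm => hm.1)
    rintro m ⟨hmM, hm⟩
    refine ⟨hmM, ?_⟩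
    simp only [sub_zero] at hm
    linarith
  · rintro ⟨r, hr, l, M, hM, hconv⟩
    refine ⟨M, hM, r + 1 + ‖l‖, by positivity, ?_⟩
    refine htrace M _ _ (hconv 1 one_pos) ?_ (fun m hm => hm.1)
    rintro m ⟨hmM, hm⟩
    refine ⟨hmM, ?_⟩
    have := norm_sub_norm_le (x m) l
    linarith
end

section
/- Let I and K be admissible ideals on ℕ and r ≥ 0. The rough I^K-limit set of degree r of any sequence (x_n) in a normed linear space is convex. -/
theorem stmt12 {X : Type*} [NormedAddCommGroup X] [NormedSpace ℝ X]
    (I K : Set (Set ℕ)) (hI : IsAdmissibleIdeal I) (hK : IsAdmissibleIdeal K)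
    (x : ℕ → X) (r : ℝ) (hr : 0 ≤ r) :
    Convex ℝ {l : X | RoughIKConv I K x r l} := by
  intro l₁ hl₁ l₂ hl₂ a b ha hb hab
  obtain ⟨M₁, hM₁, h₁⟩ := hl₁
  obtain ⟨M₂, hM₂, h₂⟩ := hl₂
  refine ⟨M₁ ∩ M₂, ?_, ?_⟩
  · rw [Set.compl_inter]
    exact hI.1.1 _ _ hM₁ hM₂
  · intro ε hε
    obtain ⟨B₁, hB₁, hB₁eq⟩ := h₁ ε hε
    obtain ⟨B₂, hB₂, hB₂eq⟩ := h₂ ε hε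
    set S := {m ∈ M₁ ∩ M₂ | r + ε ≤ ‖x m - (a • l₁ + b • l₂)‖} with hS
    refine ⟨S, ?_, ?_⟩
    · apply hK.1.2 (B₁ ∪ B₂) _ (hK.1.1 _ _ hB₁ hB₂)
      intro m hm
      obtain ⟨⟨hm1, hm2⟩, hle⟩ := hm
      by_contra hmem
      have hnb1 : m ∉ B₁ := fun h => hmem (Or.inl h)
      have hnb2 : m ∉ B₂ := fun h => hmem (Or.inr h)
      have hx1 : ¬ (r + ε ≤ ‖x m - l₁‖) := by
        intro h
        have : m ∈ B₁ ∩ M₁ := hB₁eq ▸ ⟨hm1, h⟩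
        exact hnb1 this.1
      have hx2 : ¬ (r + ε ≤ ‖x m - l₂‖) := by
        intro h
        have : m ∈ B₂ ∩ M₂ := hB₂eq ▸ ⟨hm2, h⟩
        exact hnb2 this.1
      push_neg at hx1 hx2
      have key : x m - (a • l₁ + b • l₂) = a • (x m - l₁) + b • (x m - l₂) := by
        match_scalars <;> linarith
      have hb1 : ‖x m - (a • l₁ + b • l₂)‖ ≤ a * ‖x m - l₁‖ + b * ‖x m - l₂‖ := by
        rw [key]
        calc ‖a • (x m - l₁) + b • (x m - l₂)‖
            ≤ ‖a • (x m - l₁)‖ + ‖b • (x m - l₂)‖ := norm_add_le _ _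
          _ = a * ‖x m - l₁‖ + b * ‖x m - l₂‖ := by
              rw [norm_smul, norm_smul, Real.norm_of_nonneg ha, Real.norm_of_nonneg hb]
      rcases eq_or_lt_of_le ha with ha0 | ha0
      · have : a = 0 := ha0.symm
        subst this
        simp only [zero_mul, zero_add] at hb1
        have : b = 1 := by linarith
        nlinarith
      · nlinarith
    · have hsub : S ⊆ M₁ ∩ M₂ := fun m hm => hm.1
      exact (Set.inter_eq_self_of_subset_left hsub).symm
end

section
/- Let I and K be admissible ideals on ℕ and r ≥ 0. The rough I*-limit set of degree r of any sequence (x_n) in a normed linear space is convex. -/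
theorem stmt13 {X : Type*} [NormedAddCommGroup X] [NormedSpace ℝ X]
    (I K : Set (Set ℕ)) (hI : IsAdmissibleIdeal I) (hK : IsAdmissibleIdeal K)
    (x : ℕ → X) (r : ℝ) (hr : 0 ≤ r) :
    Convex ℝ {l : X | RoughIStarConv I x r l} := by
  rintro l₁ ⟨M₁, hM₁, h₁⟩ l₂ ⟨M₂, hM₂, h₂⟩ a b ha hb hab
  refine ⟨M₁ ∩ M₂, ?_, ?_⟩
  · have : (M₁ ∩ M₂)ᶜ = M₁ᶜ ∪ M₂ᶜ := by simp [Set.compl_inter]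
    rw [this]
    exact hI.1.1 _ _ hM₁ hM₂
  · intro ε hε
    refine ((h₁ ε hε).union (h₂ ε hε)).subset ?_
    rintro m ⟨⟨hm1, hm2⟩, hm⟩
    rcases le_or_gt (r + ε) ‖x m - l₁‖ with u1 | u1
    · exact Or.inl ⟨hm1, u1⟩
    rcases le_or_gt (r + ε) ‖x m - l₂‖ with u2 | u2
    · exact Or.inr ⟨hm2, u2⟩
    exfalso
    have key : ‖x m - (a • l₁ + b • l₂)‖ ≤ a * ‖x m - l₁‖ + b * ‖x m - l₂‖ := by
      have : x m - (a • l₁ + b • l₂) = a • (x m - l₁) + b • (x m - l₂) := by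
        rw [smul_sub, smul_sub]
        rw [show a • x m - a • l₁ + (b • x m - b • l₂)
              = (a + b) • x m - (a • l₁ + b • l₂) by rw [add_smul]; abel, hab, one_smul]
      rw [this]
      calc ‖a • (x m - l₁) + b • (x m - l₂)‖ ≤ ‖a • (x m - l₁)‖ + ‖b • (x m - l₂)‖ :=
            norm_add_le _ _
        _ = a * ‖x m - l₁‖ + b * ‖x m - l₂‖ := by
            rw [norm_smul, norm_smul, Real.norm_of_nonneg ha, Real.norm_of_nonneg hb]
    nlinarith [hm, key, mul_le_mul_of_nonneg_left u1.le ha, mul_le_mul_of_nonneg_left u2.le hb,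
      mul_lt_mul_of_pos_left u1 (show (0:ℝ) < a from by nlinarith),
      hab]
end

section
/- There exist admissible ideals I and K on ℕ and a bounded real sequence (x_n) such that for some r > 0 the point −r is a rough I^K-limit of degree r of (x_n) but not a rough I*-limit of degree r of (x_n). Concretely: let A = odd numbers, A_i = {2^n(2i−1) : n ∈ ℕ}, I the ideal of subsets of ℕ meeting A and only finitely many A_i; let D_j = {2^{j−1}(2s−1) : s ∈ ℕ} and K the ideal of subsets meeting only finitely many D_j; define x_n = 1/j for n ∈ D_j. Then for every r > 0, −r is a rough I^K-limit of degree r but not a rough I*-limit of degree r of (x_n). -/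
/-- `D j` (paper's `D_{j+1}`): naturals of the form `2^j * (odd)`,
i.e. positive naturals whose 2-adic valuation is exactly `j`. -/
def Dset (j : ℕ) : Set ℕ := {n | ∃ s : ℕ, n = 2 ^ j * (2 * s + 1)}

/-- `Aset i` (paper's `A_{i+1}`): numbers `2^k * (2i+1)` with `k ≥ 1`. -/
def Aset (i : ℕ) : Set ℕ := {n | ∃ k : ℕ, 1 ≤ k ∧ n = 2 ^ k * (2 * i + 1)}

/-- The ideal `I` of the example: sets meeting only finitely many of the `Aset i`
(they may meet the odd numbers arbitrarily). -/
def idealI : Set (Set ℕ) := {S | {i : ℕ | (S ∩ Aset i).Nonempty}.Finite}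

/-- The ideal `K` of the example: sets meeting only finitely many of the `Dset j`. -/
def idealK : Set (Set ℕ) := {S | {j : ℕ | (S ∩ Dset j).Nonempty}.Finite}

/-- The sequence of the example: `x n = 1/j` when `n ∈ D_j` (paper indexing),
i.e. `x n = 1/(ν₂(n) + 1)`. -/
noncomputable def xseq (n : ℕ) : ℝ := 1 / (padicValNat 2 n + 1)

/-!
Since `xseq n = 1/(j+1)` on `Dset j`, the sequence is positive and `|xseq n + r| = r + xseq n`,
so the indices where it is `r + ε` away from `-r` lie in the finitely many `Dset j` with
`1/(j+1) ≥ ε`: the sequence is rough `K`-convergent, hence rough `I^K`-convergent with `M = ℕ`.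
On the other hand a set `M` with `Mᶜ ∈ I` contains all but finitely many `Aset i`, and each of
them contains `2(2i+1) ∈ Dset 1`, where the sequence equals `1/2`; so `M` carries infinitely
many terms at distance `r + 1/2` from `-r`, and no `I*`-witness exists.
-/

open Set

def finitelyMeeting (C : ℕ → Set ℕ) : Set (Set ℕ) :=
  {S | {i | (S ∩ C i).Nonempty}.Finite}

theorem isAdmissibleIdeal_finitelyMeeting {C : ℕ → Set ℕ}
    (hfin : ∀ n, {i | n ∈ C i}.Finite)
    (hinf : {i | (C i).Nonempty}.Infinite) : IsAdmissibleIdeal (finitelyMeeting C) := by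
  refine ⟨⟨fun A B hA hB => ?_, fun A B hA hBA => ?_⟩, fun n => ?_, fun huniv => ?_⟩
  · refine (hA.union hB).subset ?_
    rintro i ⟨n, hn | hn, hnC⟩
    exacts [Or.inl ⟨n, hn, hnC⟩, Or.inr ⟨n, hn, hnC⟩]
  · exact hA.subset fun i ⟨n, hnB, hnC⟩ => ⟨n, hBA hnB, hnC⟩
  · refine (hfin n).subset ?_
    rintro i ⟨m, rfl, hm⟩
    exact hm
  · exact hinf (by simpa [finitelyMeeting] using huniv)

theorem finite_setOf_not_subset_of_compl_mem {C : ℕ → Set ℕ} {M : Set ℕ}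
    (hM : Mᶜ ∈ finitelyMeeting C) : {i | ¬ C i ⊆ M}.Finite :=
  hM.subset fun _ hi =>
    let ⟨n, hn, hnM⟩ := not_subset.mp hi
    ⟨n, hnM, hn⟩

theorem roughIKConv_of_roughIConv {I K : Set (Set ℕ)} {X : Type*} [NormedAddCommGroup X]
    {x : ℕ → X} {r : ℝ} {l : X} (hI : ∅ ∈ I) (h : RoughIConv K x r l) :
    RoughIKConv I K x r l :=
  ⟨univ, by simpa using hI, fun ε hε => ⟨_, h ε hε, by simp⟩⟩

theorem finite_setOf_le_one_div_succ {ε : ℝ} (hε : 0 < ε) :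
    {j : ℕ | ε ≤ 1 / ((j : ℝ) + 1)}.Finite := by
  refine (finite_Iic ⌈1 / ε⌉₊).subset fun j hj => ?_
  have hj : (j : ℝ) ≤ 1 / ε := by
    rw [mem_ofPred_eq, le_div_iff₀ (by positivity)] at hj
    rw [le_div_iff₀ hε]
    nlinarith
  exact Nat.cast_le.mp (hj.trans (Nat.le_ceil _))

theorem le_of_mem_Aset {i n : ℕ} (h : n ∈ Aset i) : i ≤ n := by
  obtain ⟨k, hk, rfl⟩ := h
  have : 2 ≤ 2 ^ k := by simpa using Nat.pow_le_pow_right two_pos hk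
  nlinarith

theorem le_of_mem_Dset {j n : ℕ} (h : n ∈ Dset j) : j ≤ n := by
  obtain ⟨s, rfl⟩ := h
  have : j < 2 ^ j := Nat.lt_two_pow_self
  nlinarith

theorem two_mul_two_mul_add_one_mem_Aset (i : ℕ) : 2 * (2 * i + 1) ∈ Aset i :=
  ⟨1, le_rfl, by ring⟩

theorem two_mul_two_mul_add_one_mem_Dset_one (i : ℕ) : 2 * (2 * i + 1) ∈ Dset 1 :=
  ⟨i, by ring⟩

theorem isAdmissibleIdeal_idealI : IsAdmissibleIdeal idealI :=
  isAdmissibleIdeal_finitelyMeeting (fun n => (finite_Iic n).subset fun _ => le_of_mem_Aset)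
    (infinite_univ.mono fun i _ => ⟨_, two_mul_two_mul_add_one_mem_Aset i⟩)

theorem isAdmissibleIdeal_idealK : IsAdmissibleIdeal idealK :=
  isAdmissibleIdeal_finitelyMeeting (fun n => (finite_Iic n).subset fun _ => le_of_mem_Dset)
    (infinite_univ.mono fun j _ => ⟨2 ^ j, 0, by ring⟩)

theorem padicValNat_two_of_mem_Dset {j n : ℕ} (h : n ∈ Dset j) : padicValNat 2 n = j := by
  obtain ⟨s, rfl⟩ := h
  rw [padicValNat.mul (by positivity) (by omega), padicValNat.prime_pow,
    padicValNat.eq_zero_of_not_dvd (by omega), add_zero]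

theorem xseq_of_mem_Dset {j n : ℕ} (h : n ∈ Dset j) : xseq n = 1 / ((j : ℝ) + 1) := by
  rw [xseq, padicValNat_two_of_mem_Dset h]

theorem xseq_pos (n : ℕ) : 0 < xseq n := by
  rw [xseq]
  positivity

theorem add_le_norm_xseq_sub_neg_iff {m : ℕ} {r ε : ℝ} (hr : 0 ≤ r) :
    r + ε ≤ ‖xseq m - -r‖ ↔ ε ≤ xseq m := by
  rw [sub_neg_eq_add, Real.norm_of_nonneg (by linarith [xseq_pos m]), add_comm,
    add_le_add_iff_right]

theorem roughIConv_idealK_xseq {r : ℝ} (hr : 0 ≤ r) : RoughIConv idealK xseq r (-r) := by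
  intro ε hε
  refine (finite_setOf_le_one_div_succ hε).subset ?_
  rintro j ⟨n, hn, hnD⟩
  rw [mem_ofPred_eq, ← xseq_of_mem_Dset hnD, ← add_le_norm_xseq_sub_neg_iff hr]
  exact hn

theorem not_roughIStarConv_idealI_xseq {r : ℝ} (hr : 0 ≤ r) :
    ¬ RoughIStarConv idealI xseq r (-r) := by
  rintro ⟨M, hM, hconv⟩
  have hAM : {i | Aset i ⊆ M}.Infinite := by
    simpa [compl_ofPred] using (finite_setOf_not_subset_of_compl_mem hM).infinite_compl
  have hinj : InjOn (fun i => 2 * (2 * i + 1)) {i | Aset i ⊆ M} := fun a _ b _ h => by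
    simp only at h
    omega
  refine ((hAM.image hinj).mono ?_) (hconv (1 / 2) one_half_pos)
  rintro _ ⟨i, hi, rfl⟩
  refine ⟨hi (two_mul_two_mul_add_one_mem_Aset i), ?_⟩
  rw [add_le_norm_xseq_sub_neg_iff hr, xseq_of_mem_Dset (two_mul_two_mul_add_one_mem_Dset_one i)]
  norm_num

theorem stmt18 :
    IsAdmissibleIdeal idealI ∧ IsAdmissibleIdeal idealK ∧
    ∀ r : ℝ, 0 < r →
      RoughIKConv idealI idealK xseq r (-r) ∧
      ¬ RoughIStarConv idealI xseq r (-r) :=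
  ⟨isAdmissibleIdeal_idealI, isAdmissibleIdeal_idealK, fun _ hr =>
    ⟨roughIKConv_of_roughIConv (by simp [idealI]) (roughIConv_idealK_xseq hr.le),
      not_roughIStarConv_idealI_xseq hr.le⟩⟩
end
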